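/- arXiv:1507.07856 — 3 statements merged into one kernel-verified Lean document; each statement's English description precedes it below -/
import Mathlib

section
/- Let H be a subgraph of G and T a minimal alternating circuit that is a switch on H (edges of T ∩ H colored red, edges of T \ H colored blue). If G' = Switching(H, T), then for every vertex v, |N_H(v) ∩ N_{G'}(v)| >= d_H(v) - 2. -/
open SimpleGraph

variable {V : Type*}

/-- The quotient multigraph `H/Q` of a graph by a partition (setoid), with parts adjacent
iff some edge of `H` joins them. -/
def quotGraph (H : SimpleGraph V) (s : Setoid V) : SimpleGraph (Quotient s) where
  Adj x y := x ≠ y ∧ ∃ u v : V, Quotient.mk s u = x ∧ Quotient.mk s v = y ∧ H.Adj u v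
  symm := by constructor; rintro x y ⟨h, u, v, hu, hv, ha⟩; exact ⟨h.symm, v, u, hv, hu, ha.symm⟩
  loopless := by constructor; rintro x ⟨h, _⟩; exact h rfl

/-- `H` connects the partition `Q` if the quotient `H/Q` is connected. -/
def Connects (H : SimpleGraph V) (s : Setoid V) : Prop := (quotGraph H s).Connected

/-- `H` is an `f`-factor of `G`: a spanning subgraph with degree `f v` at each vertex. -/
def IsFFactor (G H : SimpleGraph V) (f : V → ℕ) : Prop :=
  H ≤ G ∧ ∀ v : V, (H.neighborSet v).ncard = f v

/-- A list of edges alternates in color, cyclically (consecutive edges have distinct colors,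
including the last/first pair for a closed tour). -/
def AltChain (red : Sym2 V → Prop) (l : List (Sym2 V)) : Prop :=
  List.Chain' (fun e f => ¬ (red e ↔ red f)) (l ++ l.take 1)

/-- `S` is an alternating circuit: it admits a closed Eulerian tour in which every pair
of consecutive edges have different colors. -/
def IsAlternatingCircuit (S : SimpleGraph V) (red : Sym2 V → Prop) : Prop :=
  letI := Classical.decEq V
  ∃ (v : V) (w : S.Walk v v), w.IsEulerian ∧ AltChain red w.edges

/-- The subgraph of `T` consisting of a single connected component `K`. -/
def compGraph (T : SimpleGraph V) (K : T.ConnectedComponent) : SimpleGraph V where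
  Adj u v := T.Adj u v ∧ T.connectedComponentMk u = K
  symm := by
    constructor
    rintro u v ⟨h, hk⟩
    exact ⟨h.symm, (ConnectedComponent.sound h.symm.reachable).trans hk⟩
  loopless := by constructor; rintro v ⟨h, _⟩; exact h.ne rfl

/-- `S` is a switch on `H`: coloring edges of `S ∩ H` red and edges of `S \ H` blue,
every connected component of `S` is an alternating circuit. -/
def IsSwitch (S H : SimpleGraph V) : Prop :=
  ∀ K : S.ConnectedComponent, IsAlternatingCircuit (compGraph S K) (fun e => e ∈ H.edgeSet)

/-- A minimal alternating circuit: each vertex has at most two red and two blue incident edges. -/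
def IsMinimalAC (S : SimpleGraph V) (red : Sym2 V → Prop) : Prop :=
  IsAlternatingCircuit S red ∧ ∀ v : V,
    {u | S.Adj v u ∧ red s(v, u)}.ncard ≤ 2 ∧ {u | S.Adj v u ∧ ¬ red s(v, u)}.ncard ≤ 2

/-- `Switching(H, T)`: remove the edges of `T ∩ H` from `H` and add the edges of `T \ H`. -/
def switching (H T : SimpleGraph V) : SimpleGraph V where
  Adj u v := (H.Adj u v ∧ ¬ T.Adj u v) ∨ (T.Adj u v ∧ ¬ H.Adj u v)
  symm := by
    constructor
    rintro u v (⟨h1, h2⟩ | ⟨h1, h2⟩)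
    · exact Or.inl ⟨h1.symm, fun h => h2 h.symm⟩
    · exact Or.inr ⟨h1.symm, fun h => h2 h.symm⟩
  loopless := by constructor; rintro v (⟨h, _⟩ | ⟨h, _⟩) <;> exact h.ne rfl

/-- Total weight of the edges of a graph. -/
noncomputable def wt (w : Sym2 V → ℝ) (G : SimpleGraph V) : ℝ := ∑ᶠ e ∈ G.edgeSet, w e

theorem Set.ncard_sub_le_ncard_sdiff {α : Type*} {s t : Set α} {k : ℕ}
    (h : (t ∩ s).ncard ≤ k) : s.ncard - k ≤ (s \ t).ncard := by
  rcases s.finite_or_infinite with hs | hs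
  · calc s.ncard - k ≤ s.ncard - (t ∩ s).ncard := Nat.sub_le_sub_left h _
      _ ≤ (s \ (t ∩ s)).ncard := Set.le_ncard_sdiff _ _ (hs.inter_of_right t)
      _ = (s \ t).ncard := by rw [Set.sdiff_inter_self_eq_sdiff]
  · simp [hs.ncard]

theorem neighborSet_inter_switching (H T : SimpleGraph V) (v : V) :
    H.neighborSet v ∩ (switching H T).neighborSet v = H.neighborSet v \ T.neighborSet v := by
  ext u
  simp only [Set.mem_inter_iff, Set.mem_sdiff, mem_neighborSet, switching]
  tauto

theorem IsMinimalAC.ncard_neighborSet_inter_le {H T : SimpleGraph V}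
    (hmin : IsMinimalAC T (fun e => e ∈ H.edgeSet)) (v : V) :
    (T.neighborSet v ∩ H.neighborSet v).ncard ≤ 2 := by
  convert (hmin.2 v).1 using 2
  ext u
  simp

theorem stmt7_general {V : Type*} (H T : SimpleGraph V)
    (hmin : IsMinimalAC T (fun e => e ∈ H.edgeSet)) :
    ∀ v : V,
      (H.neighborSet v).ncard - 2 ≤ (H.neighborSet v ∩ (switching H T).neighborSet v).ncard := by
  intro v
  rw [neighborSet_inter_switching]
  exact Set.ncard_sub_le_ncard_sdiff (hmin.ncard_neighborSet_inter_le v)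

theorem stmt7 {V : Type*} [Fintype V] (G H T : SimpleGraph V)
    (hH : H ≤ G) (hT : T ≤ G)
    (hmin : IsMinimalAC T (fun e => e ∈ H.edgeSet)) :
    ∀ v : V,
      (H.neighborSet v).ncard - 2 ≤ (H.neighborSet v ∩ (switching H T).neighborSet v).ncard :=
  stmt7_general H T hmin
end

section
/- Every alternating circuit U (with edges colored red and blue) can be decomposed into a family of edge-disjoint minimal alternating circuits; moreover, for any subset S of the edges of U, one can choose a subfamily of this decomposition that covers all edges of S. -/
/-!
If a vertex `x` of an alternating circuit has three edges of one colour, an alternating Eulerian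
tour passes through `x` at least three times, because the two edges of the tour at each passage
have different colours. Cutting the tour at three passages gives three closed subtours; two of
them begin with edges of the same colour, and cutting the cyclic tour just before these two edges
leaves two closed tours that still alternate. Induction on the length of the tour then splits the
circuit into edge-disjoint minimal alternating circuits, and the whole family covers every set of
edges.
-/

open SimpleGraph

variable {V : Type*}

section AltChain

variable {red : Sym2 V → Prop} {l l₁ l₂ : List (Sym2 V)}

theorem altChain_def :
    AltChain red l ↔ (l ++ l.take 1).IsChain (fun e f => ¬ (red e ↔ red f)) :=
  Iff.rfl

theorem altChain_iff_cycleChain :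
    AltChain red l ↔ Cycle.Chain (fun e f => ¬ (red e ↔ red f)) (l : Cycle (Sym2 V)) := by
  cases l <;> simp [altChain_def]

theorem AltChain.of_isRotated (h : AltChain red l₁) (hr : l₁ ~r l₂) : AltChain red l₂ := by
  rw [altChain_iff_cycleChain, ← Cycle.coe_eq_coe.2 hr]
  exact altChain_iff_cycleChain.1 h

theorem altChain_iff : AltChain red l ↔ l.IsChain (fun e f => ¬ (red e ↔ red f)) ∧
    ∀ a ∈ l.getLast?, ∀ b ∈ l.head?, ¬ (red a ↔ red b) := by
  cases l with
  | nil => simp [altChain_def]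
  | cons a t =>
    rw [altChain_def, List.take_succ_cons, List.take_zero, List.isChain_append]
    simp

theorem altChain_not_iff : AltChain (fun e => ¬ red e) l ↔ AltChain red l := by
  simp only [AltChain, not_iff_not]

theorem AltChain.reverse (h : AltChain red l) : AltChain red l.reverse := by
  rw [altChain_iff] at h ⊢
  refine ⟨List.isChain_reverse.2 (h.1.imp fun _ _ hef hfe => hef hfe.symm), ?_⟩
  rw [List.getLast?_reverse, List.head?_reverse]
  exact fun a ha b hb hab => h.2 b hb a ha hab.symm

theorem AltChain.split {a b : Sym2 V} (h : AltChain red (a :: l₁ ++ b :: l₂))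
    (hab : red a ↔ red b) : AltChain red (a :: l₁) ∧ AltChain red (b :: l₂) := by
  rw [altChain_iff, List.isChain_append,
    List.getLast?_append_of_ne_nil _ (List.cons_ne_nil _ _)] at h
  obtain ⟨⟨hc₁, hc₂, hjoin⟩, hwrap⟩ := h
  refine ⟨altChain_iff.2 ⟨hc₁, fun x hx y hy hxy => ?_⟩,
    altChain_iff.2 ⟨hc₂, fun x hx y hy hxy => ?_⟩⟩
  · obtain rfl : y = a := Option.mem_unique hy rfl
    exact hjoin x hx b rfl (hxy.trans hab)
  · obtain rfl : y = b := Option.mem_unique hy rfl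
    exact hwrap x hx a rfl (hxy.trans hab.symm)

theorem AltChain.split_three {a₁ a₂ a₃ : Sym2 V} {l₃ : List (Sym2 V)}
    (h : AltChain red (a₁ :: l₁ ++ a₂ :: l₂ ++ a₃ :: l₃)) :
    AltChain red (a₁ :: l₁) ∧ AltChain red (a₂ :: l₂ ++ a₃ :: l₃) ∨
    AltChain red (a₂ :: l₂) ∧ AltChain red (a₃ :: l₃ ++ a₁ :: l₁) ∨
    AltChain red (a₃ :: l₃) ∧ AltChain red (a₁ :: l₁ ++ a₂ :: l₂) := by
  have h₂ : AltChain red (a₂ :: l₂ ++ (a₃ :: l₃ ++ a₁ :: l₁)) :=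
    h.of_isRotated <| by
      simpa using List.isRotated_append (l := a₁ :: l₁) (l' := a₂ :: l₂ ++ a₃ :: l₃)
  have h₃ : AltChain red (a₃ :: l₃ ++ (a₁ :: l₁ ++ a₂ :: l₂)) :=
    h.of_isRotated List.isRotated_append
  rw [List.append_assoc] at h
  by_cases h₁₂ : red a₁ ↔ red a₂
  · exact .inl (h.split h₁₂)
  by_cases h₂₃ : red a₂ ↔ red a₃
  · exact .inr (.inl (h₂.split h₂₃))
  · exact .inr (.inr (h₃.split (by tauto)))
end AltChain

theorem List.ncard_setOf_mk_mem_le_countP [DecidableEq V] (P : Sym2 V → Prop) [DecidablePred P]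
    (x : V) (l : List (Sym2 V)) :
    {u | s(x, u) ∈ l ∧ P s(x, u)}.ncard ≤ l.countP (fun e => P e ∧ x ∈ e) :=
  calc {u | s(x, u) ∈ l ∧ P s(x, u)}.ncard
      ≤ ((l.filter fun e => P e ∧ x ∈ e).toFinset : Set (Sym2 V)).ncard :=
        Set.ncard_le_ncard_of_injOn (fun u => s(x, u)) (fun u hu => by simpa using hu)
          (fun _ _ _ _ h => Sym2.congr_right.1 h)
    _ ≤ (l.filter fun e => P e ∧ x ∈ e).length := by
        rw [Set.ncard_coe_finset]
        exact List.toFinset_card_le _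
    _ = l.countP (fun e => P e ∧ x ∈ e) := List.countP_eq_length_filter.symm

namespace SimpleGraph.Walk

variable {G : SimpleGraph V}

section

variable [DecidableEq V]

theorem exists_eq_append_of_mem_support_tail {x v : V} (w : G.Walk x v)
    (h : x ∈ w.support.tail) :
    ∃ (p : G.Walk x x) (q : G.Walk x v), ¬ p.Nil ∧ w = p.append q ∧
      q.support.tail.count x + 1 = w.support.tail.count x := by
  cases w with
  | nil => simp at h
  | cons hadj w' =>
    rw [support_cons, List.tail_cons] at h
    refine ⟨cons hadj (w'.takeUntil x h), w'.dropUntil x h, not_nil_cons,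
      by rw [cons_append, take_spec], ?_⟩
    have hsupp := congrArg support (take_spec w' h)
    rw [support_append] at hsupp
    rw [support_cons, List.tail_cons, ← hsupp, List.count_append,
      count_support_takeUntil_eq_one, add_comm]

theorem exists_eq_append_append_of_three_le_count {x : V} (w : G.Walk x x)
    (h : 3 ≤ w.support.tail.count x) :
    ∃ p₁ p₂ p₃ : G.Walk x x, ¬ p₁.Nil ∧ ¬ p₂.Nil ∧ ¬ p₃.Nil ∧ w = p₁.append (p₂.append p₃) := by
  obtain ⟨p₁, q, hp₁, rfl, hq⟩ :=
    w.exists_eq_append_of_mem_support_tail (List.count_pos_iff.1 (by omega))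
  obtain ⟨p₂, p₃, hp₂, rfl, hp₃⟩ :=
    q.exists_eq_append_of_mem_support_tail (List.count_pos_iff.1 (by omega))
  refine ⟨p₁, p₂, p₃, hp₁, hp₂, fun hnil => ?_, rfl⟩
  rw [nil_iff_support_eq.1 hnil] at hp₃
  simp at hp₃
  omega

theorem exists_altChain_split {red : Sym2 V → Prop} {x : V} (w : G.Walk x x)
    (hw : AltChain red w.edges) (h : 3 ≤ w.support.tail.count x) :
    ∃ p q : G.Walk x x, w.edges.Perm (p.edges ++ q.edges) ∧ ¬ p.Nil ∧ ¬ q.Nil ∧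
      AltChain red p.edges ∧ AltChain red q.edges := by
  obtain ⟨p₁, p₂, p₃, h₁, h₂, h₃, rfl⟩ := w.exists_eq_append_append_of_three_le_count h
  obtain ⟨a₁, l₁, he₁⟩ := List.exists_cons_of_ne_nil (mt edges_eq_nil.1 h₁)
  obtain ⟨a₂, l₂, he₂⟩ := List.exists_cons_of_ne_nil (mt edges_eq_nil.1 h₂)
  obtain ⟨a₃, l₃, he₃⟩ := List.exists_cons_of_ne_nil (mt edges_eq_nil.1 h₃)
  rw [edges_append, edges_append, he₁, he₂, he₃, ← List.append_assoc] at hw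
  rcases hw.split_three with ⟨hA, hB⟩ | ⟨hA, hB⟩ | ⟨hA, hB⟩
  · refine ⟨p₁, p₂.append p₃, by simp [edges_append], h₁, by simp [nil_append_iff, h₂], ?_,
      ?_⟩
    · rwa [he₁]
    · rwa [edges_append, he₂, he₃]
  · refine ⟨p₂, p₃.append p₁, ?_, h₂, by simp [nil_append_iff, h₃], ?_, ?_⟩
    · simpa [edges_append] using
        (List.isRotated_append (l := p₁.edges) (l' := p₂.edges ++ p₃.edges)).perm
    · rwa [he₂]
    · rwa [edges_append, he₃, he₁]
  · refine ⟨p₃, p₁.append p₂, ?_, h₃, by simp [nil_append_iff, h₁], ?_, ?_⟩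
    · simpa [edges_append] using
        (List.isRotated_append (l := p₁.edges ++ p₂.edges) (l' := p₃.edges)).perm
    · rwa [he₃]
    · rwa [edges_append, he₁, he₂]


/-- Each `P`-edge at `x` is charged to a visit of `x`: the visit it enters, or else the visit it
leaves, whose incoming edge then has the other colour. Only a first edge leaving `u = x` has no
such visit. -/
theorem countP_le_count_support_tail_add {P : Sym2 V → Prop} [DecidablePred P] (x : V) :
    ∀ {u v : V} (p : G.Walk u v), p.edges.IsChain (fun e f => ¬ (P e ↔ P f)) →
      p.edges.countP (fun e => P e ∧ x ∈ e) ≤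
        p.support.tail.count x + if u = x ∧ ∃ e ∈ p.edges.head?, P e then 1 else 0
  | _, _, nil, _ => by simp
  | u, _, cons (v := b) hadj q, hc => by
    rw [edges_cons, List.isChain_cons] at hc
    have ih := countP_le_count_support_tail_add x q hc.2
    rw [edges_cons, support_cons, List.tail_cons, ← cons_tail_support q, List.countP_cons,
      List.count_cons]
    simp only [List.head?_cons, Option.mem_some_iff, exists_eq_left', beq_iff_eq] at ih ⊢
    by_cases hux : u = x
    · have hbx : b ≠ x := hux ▸ hadj.ne.symm
      simpa [hux, hbx] using ih
    by_cases hbx : b = x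
    · subst hbx
      by_cases he : P s(u, b)
      · have hf : ¬ ∃ f, q.edges.head? = some f ∧ P f :=
          fun ⟨f, hf, hPf⟩ => hc.1 f hf (iff_of_true he hPf)
        simp [he, hf] at ih ⊢
        omega
      · simp [he] at ih ⊢
        split_ifs at ih <;> omega
    · have hxe : x ∉ s(u, b) := by simp [Ne.symm hux, Ne.symm hbx]
      simpa [hux, hbx, hxe] using ih

theorem countP_le_count_support_tail {P : Sym2 V → Prop} [DecidablePred P] {x : V}
    (w : G.Walk x x) (hw : AltChain P w.edges) :
    w.edges.countP (fun e => P e ∧ x ∈ e) ≤ w.support.tail.count x := by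
  by_cases hfirst : ∃ e ∈ w.edges.head?, P e
  · -- then the last edge has the other colour, so count along the reversed tour
    have hlast : ¬ ∃ e ∈ w.reverse.edges.head?, P e := by
      rintro ⟨f, hf, hPf⟩
      obtain ⟨e, he, hPe⟩ := hfirst
      rw [edges_reverse, List.head?_reverse] at hf
      exact (altChain_iff.1 hw).2 f hf e he (iff_of_true hPf hPe)
    have hrev := countP_le_count_support_tail_add x w.reverse
      (altChain_iff.1 (by simpa only [edges_reverse] using hw.reverse)).1
    rwa [if_neg fun h => hlast h.2, add_zero, edges_reverse, List.countP_reverse, support_reverse,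
      List.tail_reverse, List.count_reverse, ← (tail_support_perm_dropLast_support w).count_eq]
      at hrev
  · have h := countP_le_count_support_tail_add x w (altChain_iff.1 hw).1
    rwa [if_neg fun h => hfirst h.2, add_zero] at h

end

theorem exists_altChain_split_of_three_le_ncard {red : Sym2 V → Prop} {v x : V} (w : G.Walk v v)
    (hw : AltChain red w.edges) (h : 3 ≤ {u | s(x, u) ∈ w.edges ∧ red s(x, u)}.ncard) :
    ∃ p q : G.Walk x x, w.edges.Perm (p.edges ++ q.edges) ∧ ¬ p.Nil ∧ ¬ q.Nil ∧
      AltChain red p.edges ∧ AltChain red q.edges := by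
  classical
  obtain ⟨u, hu, -⟩ := Set.nonempty_of_ncard_ne_zero
    (by omega : {u | s(x, u) ∈ w.edges ∧ red s(x, u)}.ncard ≠ 0)
  have hrot := w.rotate_edges x (w.fst_mem_support_of_mem_edges hu)
  have hw' := hw.of_isRotated hrot.symm
  obtain ⟨p, q, hpq, hrest⟩ := exists_altChain_split _ hw' <| calc
    3 ≤ {u | s(x, u) ∈ w.edges ∧ red s(x, u)}.ncard := h
    _ ≤ w.edges.countP (fun e => red e ∧ x ∈ e) := List.ncard_setOf_mk_mem_le_countP _ _ _
    _ = (w.rotate x _).edges.countP (fun e => red e ∧ x ∈ e) := hrot.perm.countP_eq _ |>.symm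
    _ ≤ _ := countP_le_count_support_tail _ hw'
  exact ⟨p, q, hrot.perm.symm.trans hpq, hrest⟩

theorem toSubgraph_spanningCoe_adj {u v x y : V} (w : G.Walk u v) :
    w.toSubgraph.spanningCoe.Adj x y ↔ s(x, y) ∈ w.edges := by
  rw [Subgraph.spanningCoe_adj, ← Subgraph.mem_edgeSet, mem_edges_toSubgraph]

theorem isAlternatingCircuit_toSubgraph_spanningCoe {red : Sym2 V → Prop} {x : V}
    (w : G.Walk x x) (hnd : w.edges.Nodup) (hw : AltChain red w.edges) :
    IsAlternatingCircuit w.toSubgraph.spanningCoe red := by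
  classical
  refine ⟨x, w.transfer _ fun e he => ?_, fun e he => ?_, by rwa [edges_transfer]⟩
  · rwa [Subgraph.edgeSet_spanningCoe, edgeSet_toSubgraph]
  · rw [edges_transfer]
    exact List.count_eq_one_of_mem hnd (by simpa using he)

end SimpleGraph.Walk

def IsMinimalACDecomposition (red : Sym2 V → Prop) (E : Set (Sym2 V))
    (𝒰 : Set (SimpleGraph V)) : Prop :=
  (∀ C ∈ 𝒰, IsMinimalAC C red) ∧ (𝒰.Pairwise fun C D => Disjoint C.edgeSet D.edgeSet) ∧
    ⋃ C ∈ 𝒰, C.edgeSet = E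

theorem IsMinimalACDecomposition.union {red : Sym2 V → Prop} {E₁ E₂ : Set (Sym2 V)}
    {𝒰₁ 𝒰₂ : Set (SimpleGraph V)} (h₁ : IsMinimalACDecomposition red E₁ 𝒰₁)
    (h₂ : IsMinimalACDecomposition red E₂ 𝒰₂) (hE : Disjoint E₁ E₂) :
    IsMinimalACDecomposition red (E₁ ∪ E₂) (𝒰₁ ∪ 𝒰₂) := by
  obtain ⟨hmin₁, hdisj₁, hcover₁⟩ := h₁
  obtain ⟨hmin₂, hdisj₂, hcover₂⟩ := h₂
  have hsub₁ {C} (hC : C ∈ 𝒰₁) : C.edgeSet ⊆ E₁ := hcover₁ ▸ Set.subset_biUnion_of_mem hC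
  have hsub₂ {C} (hC : C ∈ 𝒰₂) : C.edgeSet ⊆ E₂ := hcover₂ ▸ Set.subset_biUnion_of_mem hC
  refine ⟨fun C hC => hC.elim (hmin₁ C) (hmin₂ C), ?_,
    by rw [Set.biUnion_union, hcover₁, hcover₂]⟩
  rintro C (hC | hC) D (hD | hD) hCD
  · exact hdisj₁ hC hD hCD
  · exact hE.mono (hsub₁ hC) (hsub₂ hD)
  · exact hE.symm.mono (hsub₂ hC) (hsub₁ hD)
  · exact hdisj₂ hC hD hCD

theorem exists_isMinimalACDecomposition {G : SimpleGraph V} (red : Sym2 V → Prop) {v : V}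
    (w : G.Walk v v) (hnd : w.edges.Nodup) (hw : AltChain red w.edges) :
    ∃ 𝒰, IsMinimalACDecomposition red w.edgeSet 𝒰 := by
  induction hn : w.length using Nat.strong_induction_on generalizing v w with
  | _ n ih =>
  set C := w.toSubgraph.spanningCoe
  by_cases hmin : ∀ x, {u | C.Adj x u ∧ red s(x, u)}.ncard ≤ 2 ∧
      {u | C.Adj x u ∧ ¬ red s(x, u)}.ncard ≤ 2
  · refine ⟨{C}, fun _ hD => ?_, Set.pairwise_singleton _ _, ?_⟩
    · rw [hD]
      exact ⟨w.isAlternatingCircuit_toSubgraph_spanningCoe hnd hw, hmin⟩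
    · rw [Set.biUnion_singleton, Subgraph.edgeSet_spanningCoe, Walk.edgeSet_toSubgraph]
  obtain ⟨x, p, q, hperm, hp, hq, hAp, hAq⟩ : ∃ x, ∃ p q : G.Walk x x,
      w.edges.Perm (p.edges ++ q.edges) ∧ ¬ p.Nil ∧ ¬ q.Nil ∧
        AltChain red p.edges ∧ AltChain red q.edges := by
    push Not at hmin
    obtain ⟨x, hx⟩ := hmin
    simp only [C, Walk.toSubgraph_spanningCoe_adj] at hx
    by_cases hred : {u | s(x, u) ∈ w.edges ∧ red s(x, u)}.ncard ≤ 2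
    · obtain ⟨p, q, hperm, hp, hq, hAp, hAq⟩ :=
        w.exists_altChain_split_of_three_le_ncard (x := x) (altChain_not_iff.2 hw) (hx hred)
      exact ⟨x, p, q, hperm, hp, hq, altChain_not_iff.1 hAp, altChain_not_iff.1 hAq⟩
    · exact ⟨x, w.exists_altChain_split_of_three_le_ncard hw (by omega)⟩
  have hnd' := List.nodup_append.1 (hperm.nodup_iff.1 hnd)
  have hlen : n = p.length + q.length := by
    rw [← hn, ← Walk.length_edges, hperm.length_eq, List.length_append, Walk.length_edges,
      Walk.length_edges]
  have hp' := Walk.not_nil_iff_lt_length.1 hp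
  have hq' := Walk.not_nil_iff_lt_length.1 hq
  obtain ⟨𝒰p, hUp⟩ := ih _ (by omega) p hnd'.1 hAp rfl
  obtain ⟨𝒰q, hUq⟩ := ih _ (by omega) q hnd'.2.1 hAq rfl
  have hE : w.edgeSet = p.edgeSet ∪ q.edgeSet := by
    ext e
    simp [Walk.mem_edgeSet, hperm.mem_iff]
  exact ⟨𝒰p ∪ 𝒰q,
    hE ▸ hUp.union hUq (Set.disjoint_left.2 fun e hp hq => hnd'.2.2 e hp e hq rfl)⟩

theorem stmt11_general {V : Type*} (U : SimpleGraph V) (red : Sym2 V → Prop)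
    (hU : IsAlternatingCircuit U red) :
    ∃ 𝒰 : Set (SimpleGraph V),
      (∀ C ∈ 𝒰, C ≤ U ∧ IsMinimalAC C red) ∧
      (𝒰.Pairwise fun C D => Disjoint C.edgeSet D.edgeSet) ∧
      (⋃ C ∈ 𝒰, C.edgeSet) = U.edgeSet ∧
      ∀ S : Set (Sym2 V), S ⊆ U.edgeSet →
        ∃ 𝒰' ⊆ 𝒰, S ⊆ ⋃ C ∈ 𝒰', C.edgeSet := by
  classical
  obtain ⟨v, w, hE, hA⟩ := hU
  obtain ⟨𝒰, hmin, hdisj, hcover⟩ :=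
    exists_isMinimalACDecomposition red w hE.isTrail.edges_nodup hA
  have hcover' : ⋃ C ∈ 𝒰, C.edgeSet = U.edgeSet :=
    hcover.trans (Set.ext fun _ => hE.mem_edges_iff)
  refine ⟨𝒰, fun C hC => ⟨?_, hmin C hC⟩, hdisj, hcover',
    fun S hS => ⟨𝒰, subset_rfl, hcover' ▸ hS⟩⟩
  exact edgeSet_subset_edgeSet.1 (hcover' ▸ Set.subset_biUnion_of_mem hC)

theorem stmt11 {V : Type*} [Fintype V] (U : SimpleGraph V) (red : Sym2 V → Prop)
    (hU : IsAlternatingCircuit U red) :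
    ∃ 𝒰 : Set (SimpleGraph V),
      (∀ C ∈ 𝒰, C ≤ U ∧ IsMinimalAC C red) ∧
      (𝒰.Pairwise fun C D => Disjoint C.edgeSet D.edgeSet) ∧
      (⋃ C ∈ 𝒰, C.edgeSet) = U.edgeSet ∧
      ∀ S : Set (Sym2 V), S ⊆ U.edgeSet →
        ∃ 𝒰' ⊆ 𝒰, S ⊆ ⋃ C ∈ 𝒰', C.edgeSet :=
  stmt11_general U red hU
end

section
/- Let G be an edge-weighted graph, H a minimum-weight f-factor of G, T ⊆ E(G) \ E(H), and H' a minimum-weight f-factor among all f-factors containing T. Color E(H) Δ E(H') with red for edges of H and blue for edges of H', and let S be any decomposition of the symmetric difference into edge-disjoint minimal alternating circuits. Then every circuit s in S with positive weight W(s) contains at least one edge of T. -/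
/-! If a positive circuit `s` avoided `T`, switching `H'` along `s` would produce an `f`-factor
that still contains `T` and weighs `w(H') - W(s) < w(H')`, against the choice of `H'`. It is an
`f`-factor because `s ⊆ H Δ H'` makes the red edges of `s` exactly its edges outside `H'`, and at
every vertex an alternating circuit has as many red as blue edges: its closed Eulerian tour
leaves a vertex by an edge of the other colour each time it enters it. -/

open SimpleGraph

variable {V : Type*}

open scoped symmDiff

namespace List

variable {α β : Type*}

theorem isChain_append_take_one_iff_forall₂_rotate_one {R : α → α → Prop} {l : List α} :
    IsChain R (l ++ l.take 1) ↔ Forall₂ R l (l.rotate 1) := by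
  cases l with
  | nil => simp
  | cons a l =>
    simpa using isChain_cons_append_singleton_iff_forall₂ (R := R) (a := a) (b := a)

theorem Forall₂.countP_eq {R : α → β → Prop} {p : α → Bool} {q : β → Bool}
    {l₁ : List α} {l₂ : List β} (h : Forall₂ R l₁ l₂) (hpq : ∀ a b, R a b → (p a ↔ q b)) :
    l₁.countP p = l₂.countP q := by
  induction h with
  | nil => rfl
  | cons hab _ ih => simp only [countP_cons, ih, Bool.eq_iff_iff.mpr (hpq _ _ hab)]

theorem countP_or_of_disjoint {p q : α → Bool} {l : List α} (h : ∀ a ∈ l, ¬ (p a ∧ q a)) :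
    l.countP (fun a => p a || q a) = l.countP p + l.countP q := by
  induction l with
  | nil => rfl
  | cons a l ih =>
    simp only [countP_cons, ih fun b hb => h b (mem_cons_of_mem a hb)]
    have := h a mem_cons_self
    cases hp : p a <;> cases hq : q a <;> simp [hp, hq] at this ⊢ <;> omega

theorem Nodup.countP_eq_ncard {p : α → Prop} [DecidablePred p] {l : List α} (hl : l.Nodup) :
    l.countP (fun a => decide (p a)) = {a | a ∈ l ∧ p a}.ncard := by
  classical
  have : {a | a ∈ l ∧ p a} = ↑(l.filter p).toFinset := by ext; simp
  rw [this, Set.ncard_coe_finset, toFinset_card_of_nodup (hl.filter _), countP_eq_length_filter]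

end List

namespace Set

variable {α : Type*} {s a b : Set α}

theorem inter_eq_diff_of_subset_symmDiff (h : s ⊆ a ∆ b) : s ∩ b = s \ a := by
  ext x; have := @h x; simp only [mem_inter_iff, mem_sdiff, mem_symmDiff] at *; tauto

theorem diff_eq_inter_of_subset_symmDiff (h : s ⊆ a ∆ b) : s \ b = s ∩ a := by
  ext x; have := @h x; simp only [mem_inter_iff, mem_sdiff, mem_symmDiff] at *; tauto

end Set

namespace SimpleGraph.Walk

variable {S : SimpleGraph V} {x : V}

theorem forall₂_dartAdj_darts_rotate_one (c : S.Walk x x) :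
    c.darts.Forall₂ S.DartAdj (c.darts.rotate 1) := by
  rw [← List.isChain_append_take_one_iff_forall₂_rotate_one]
  refine (c.append c).isChain_dartAdj_darts.prefix ?_
  rw [darts_append]
  exact (List.prefix_append_right_inj _).2 (List.take_prefix _ _)

theorem countP_snd_eq_countP_fst [DecidableEq V] {r r' : Sym2 V → Prop} [DecidablePred r]
    [DecidablePred r'] (c : S.Walk x x)
    (hc : c.darts.Forall₂ (fun d d' => r d.edge ↔ r' d'.edge) (c.darts.rotate 1)) (v : V) :
    c.darts.countP (fun d => decide (d.snd = v ∧ r d.edge)) =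
      c.darts.countP (fun d => decide (d.fst = v ∧ r' d.edge)) := by
  have hstep : c.darts.Forall₂ (fun d d' => d.snd = d'.fst ∧ (r d.edge ↔ r' d'.edge))
      (c.darts.rotate 1) :=
    .mp (fun _ _ hadj hr => ⟨hadj, hr⟩) c.forall₂_dartAdj_darts_rotate_one hc
  refine (hstep.countP_eq ?_).trans ((c.darts.rotate_perm 1).countP_eq _)
  rintro d d' ⟨hadj, hr⟩
  simp only [decide_eq_true_iff, hr, hadj]

theorem IsEulerian.ncard_adj_eq_countP_fst_add_countP_snd [DecidableEq V] {c : S.Walk x x}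
    (hc : c.IsEulerian) (r : Sym2 V → Prop) [DecidablePred r] (v : V) :
    {u | S.Adj v u ∧ r s(v, u)}.ncard =
      c.darts.countP (fun d => decide (d.fst = v ∧ r d.edge)) +
        c.darts.countP (fun d => decide (d.snd = v ∧ r d.edge)) := by
  have himage :
      (fun u => s(v, u)) '' {u | S.Adj v u ∧ r s(v, u)} = {e | e ∈ c.edges ∧ v ∈ e ∧ r e} := by
    ext e
    constructor
    · rintro ⟨u, ⟨hadj, hr⟩, rfl⟩
      exact ⟨hc.mem_edges_iff.2 hadj, Sym2.mem_mk_left _ _, hr⟩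
    · rintro ⟨he, hv, hr⟩
      obtain ⟨u, rfl⟩ := Sym2.mem_iff_exists.1 hv
      exact ⟨u, ⟨hc.mem_edges_iff.1 he, hr⟩, rfl⟩
  rw [← Set.ncard_image_of_injective _ (fun _ _ => Sym2.congr_right.1), himage,
    ← hc.isTrail.edges_nodup.countP_eq_ncard, edges, List.countP_map,
    ← List.countP_or_of_disjoint]
  · refine List.countP_congr fun d _ => ?_
    simp only [Function.comp_apply, Dart.edge, Sym2.mem_iff, Bool.or_eq_true,
      decide_eq_true_iff]
    grind
  · intro d _ h
    simp only [decide_eq_true_eq] at h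
    exact d.adj.ne (h.1.1.trans h.2.1.symm)

end SimpleGraph.Walk

theorem IsAlternatingCircuit.ncard_red_eq_ncard_blue {S : SimpleGraph V} {red : Sym2 V → Prop}
    (h : IsAlternatingCircuit S red) (v : V) :
    {u | S.Adj v u ∧ red s(v, u)}.ncard = {u | S.Adj v u ∧ ¬ red s(v, u)}.ncard := by
  classical
  obtain ⟨x, c, hc, halt⟩ := h
  have hflip :
      c.darts.Forall₂ (fun d d' => ¬ (red d.edge ↔ red d'.edge)) (c.darts.rotate 1) := by
    rwa [AltChain, List.Chain', Walk.edges, ← List.map_take, ← List.map_append, List.isChain_map,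
      List.isChain_append_take_one_iff_forall₂_rotate_one] at halt
  rw [hc.ncard_adj_eq_countP_fst_add_countP_snd red,
    hc.ncard_adj_eq_countP_fst_add_countP_snd (fun e => ¬ red e),
    c.countP_snd_eq_countP_fst (r' := fun e => ¬ red e) (hflip.imp fun _ _ h => by tauto),
    c.countP_snd_eq_countP_fst (r := fun e => ¬ red e) (r' := red)
      (hflip.imp fun _ _ h => by tauto),
    add_comm]

theorem neighborSet_switching (H S : SimpleGraph V) (v : V) :
    (switching H S).neighborSet v = H.neighborSet v ∆ S.neighborSet v :=
  rfl

theorem edgeSet_switching (H S : SimpleGraph V) :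
    (switching H S).edgeSet = H.edgeSet ∆ S.edgeSet := by
  ext e
  induction e using Sym2.ind
  rfl

theorem IsFFactor.switching [Finite V] {G H S : SimpleGraph V} {f : V → ℕ}
    (hH : IsFFactor G H f) (hS : S ≤ G)
    (hbal : ∀ v,
      (S.neighborSet v ∩ H.neighborSet v).ncard = (S.neighborSet v \ H.neighborSet v).ncard) :
    IsFFactor G (switching H S) f := by
  refine ⟨fun u v huv => huv.elim (fun h => hH.1 h.1) (fun h => hS h.1), fun v => ?_⟩
  rw [neighborSet_switching, Set.symmDiff_def, Set.ncard_union_eq disjoint_sdiff_sdiff,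
    ← hbal v,
    Set.inter_comm, add_comm, Set.ncard_inter_add_ncard_sdiff_eq_ncard, hH.2 v]

theorem wt_switching [Finite V] (w : Sym2 V → ℝ) (H S : SimpleGraph V) :
    wt w (switching H S) =
      wt w H + ((∑ᶠ e ∈ S.edgeSet \ H.edgeSet, w e) - ∑ᶠ e ∈ S.edgeSet ∩ H.edgeSet, w e) := by
  rw [wt, wt, edgeSet_switching, Set.symmDiff_def,
    finsum_mem_union disjoint_sdiff_sdiff (Set.toFinite _) (Set.toFinite _),
    ← finsum_mem_inter_add_sdiff S.edgeSet (Set.toFinite H.edgeSet), Set.inter_comm]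
  ring

theorem stmt12_general {V : Type*} [Fintype V] (G : SimpleGraph V) (w : Sym2 V → ℝ)
    (f : V → ℕ) (H H' : SimpleGraph V) (T : Set (Sym2 V))
    (hH : IsFFactor G H f)
    (hH' : IsFFactor G H' f ∧ T ⊆ H'.edgeSet)
    (hH'min : ∀ H2 : SimpleGraph V, IsFFactor G H2 f → T ⊆ H2.edgeSet → wt w H' ≤ wt w H2)
    (𝒮 : Set (SimpleGraph V))
    (hmin : ∀ s ∈ 𝒮, IsMinimalAC s (fun e => e ∈ H.edgeSet))
    (hdecomp : (⋃ s ∈ 𝒮, s.edgeSet) = (switching H H').edgeSet) :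
    ∀ s ∈ 𝒮,
      0 < (∑ᶠ e ∈ (s.edgeSet \ H.edgeSet), w e) - (∑ᶠ e ∈ (s.edgeSet ∩ H.edgeSet), w e) →
        (s.edgeSet ∩ T).Nonempty := by
  intro s hs hpos
  by_contra hsT
  have hs_sub : s.edgeSet ⊆ H.edgeSet ∆ H'.edgeSet := by
    rw [← edgeSet_switching, ← hdecomp]
    exact Set.subset_biUnion_of_mem hs
  have hsG : s ≤ G := fun u v huv =>
    (hs_sub (s.mem_edgeSet.2 huv)).elim (fun h => hH.1 h.1) (fun h => hH'.1.1 h.1)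
  have hbal (v : V) :
      (s.neighborSet v ∩ H'.neighborSet v).ncard = (s.neighborSet v \ H'.neighborSet v).ncard := by
    have hN : s.neighborSet v ⊆ H.neighborSet v ∆ H'.neighborSet v :=
      fun u hu => (hs_sub (s.mem_edgeSet.2 hu) :)
    rw [Set.inter_eq_diff_of_subset_symmDiff hN, Set.diff_eq_inter_of_subset_symmDiff hN]
    exact ((hmin s hs).1.ncard_red_eq_ncard_blue v).symm
  have hT2 : T ⊆ (switching H' s).edgeSet := fun e he => by
    rw [edgeSet_switching]
    exact Or.inl ⟨hH'.2 he, fun hes => hsT ⟨e, hes, he⟩⟩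
  have hle := hH'min _ (hH'.1.switching hsG hbal) hT2
  rw [wt_switching, Set.diff_eq_inter_of_subset_symmDiff hs_sub,
    Set.inter_eq_diff_of_subset_symmDiff hs_sub] at hle
  linarith

theorem stmt12 {V : Type*} [Fintype V] (G : SimpleGraph V) (w : Sym2 V → ℝ)
    (f : V → ℕ) (H H' : SimpleGraph V) (T : Set (Sym2 V))
    (hT : T ⊆ G.edgeSet \ H.edgeSet)
    (hH : IsFFactor G H f)
    (hHmin : ∀ H2 : SimpleGraph V, IsFFactor G H2 f → wt w H ≤ wt w H2)
    (hH' : IsFFactor G H' f ∧ T ⊆ H'.edgeSet)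
    (hH'min : ∀ H2 : SimpleGraph V, IsFFactor G H2 f → T ⊆ H2.edgeSet → wt w H' ≤ wt w H2)
    (𝒮 : Set (SimpleGraph V))
    (hmin : ∀ s ∈ 𝒮, IsMinimalAC s (fun e => e ∈ H.edgeSet))
    (hdisj : 𝒮.Pairwise fun a b => Disjoint a.edgeSet b.edgeSet)
    (hdecomp : (⋃ s ∈ 𝒮, s.edgeSet) = (switching H H').edgeSet) :
    ∀ s ∈ 𝒮,
      0 < (∑ᶠ e ∈ (s.edgeSet \ H.edgeSet), w e) - (∑ᶠ e ∈ (s.edgeSet ∩ H.edgeSet), w e) →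
        (s.edgeSet ∩ T).Nonempty :=
  stmt12_general G w f H H' T hH hH' hH'min 𝒮 hmin hdecomp
end
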